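/- There exists a constant c > 0 such that for all positive integers n and m with m ≤ n, |λ_n − λ_m| ≥ c·(n − m)·n^{1/2}, where λ_n = −i·(n(g + n²)·tanh(hn))^{1/2}. -/

import Mathlib

/-!
Write `ω(x)² = x (g + x²) tanh (h x)`. Since `√a - √b = (a - b) / (√a + √b)`, the gap
`ω(n) - ω(m)` is at least `(ω(n)² - ω(m)²) / (2 ω(n))`. Both factors of `ω²` increase, so the
numerator is at least `tanh h · (n - m) n²`, while `ω(n)² ≤ (g + 1) n³` bounds the denominator by
`2 √(g + 1) n^{3/2}`; what remains is `(n - m) √n` times the constant `tanh h / (2 √(g + 1))`.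
-/

open Real

namespace Real

lemma tanh_pos {x : ℝ} (hx : 0 < x) : 0 < tanh x := by
  rw [tanh_eq_sinh_div_cosh]
  exact div_pos (sinh_pos_iff.2 hx) (cosh_pos x)

lemma tanh_monotone : Monotone tanh := by
  intro x y hxy
  rw [tanh_eq_sinh_div_cosh, tanh_eq_sinh_div_cosh, div_le_div_iff₀ (cosh_pos x) (cosh_pos y)]
  have h : sinh (x - y) ≤ 0 := sinh_nonpos_iff.2 (by linarith)
  rw [sinh_sub] at h
  linarith

lemma sub_div_two_sqrt_le_sqrt_sub_sqrt {a b : ℝ} (hb : 0 ≤ b) (hba : b ≤ a) :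
    (a - b) / (2 * √a) ≤ √a - √b := by
  have hsqrt : √b ≤ √a := sqrt_le_sqrt hba
  rcases (sqrt_nonneg a).eq_or_lt with ha | ha
  · rw [← ha] at hsqrt ⊢
    rw [mul_zero, div_zero]
    linarith
  rw [div_le_iff₀ (by positivity)]
  nlinarith [sq_sqrt hb, sq_sqrt (hb.trans hba), sqrt_nonneg b]

end Real

lemma sub_mul_le_mul_sub_mul {p q s t : ℝ} (hq : 0 ≤ q) (hqp : q ≤ p) (hts : t ≤ s) :
    (p - q) * t ≤ p * s - q * t := by
  nlinarith [mul_le_mul_of_nonneg_left hts (hq.trans hqp)]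

lemma Complex.norm_neg_I_mul_ofReal_sub (a b : ℝ) :
    ‖-Complex.I * a - -Complex.I * b‖ = |a - b| := by
  rw [← mul_sub, norm_mul, norm_neg, Complex.norm_I, one_mul, ← Complex.ofReal_sub,
    Complex.norm_real, Real.norm_eq_abs]

/-- `|λ_n|²`, as a function of a real wave number. -/
noncomputable def dispersion (g h x : ℝ) : ℝ := x * (g + x ^ 2) * tanh (h * x)

section dispersion

variable {g h x y : ℝ}

lemma dispersion_pos (hg : 0 ≤ g) (hh : 0 < h) (hx : 0 < x) : 0 < dispersion g h x :=
  mul_pos (by positivity) (tanh_pos (mul_pos hh hx))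

lemma tanh_mul_le_dispersion_sub_dispersion (hg : 0 ≤ g) (hh : 0 ≤ h) (hy : 1 ≤ y)
    (hyx : y ≤ x) : tanh h * ((x - y) * x ^ 2) ≤ dispersion g h x - dispersion g h y := by
  have hpoly : (x - y) * x ^ 2 ≤ x * (g + x ^ 2) - y * (g + y ^ 2) := by
    have : 0 ≤ (x - y) * (g + x * y + y ^ 2) := mul_nonneg (sub_nonneg.2 hyx) (by nlinarith)
    linear_combination this
  have hpoly_nonneg : 0 ≤ x * (g + x ^ 2) - y * (g + y ^ 2) :=
    (mul_nonneg (sub_nonneg.2 hyx) (sq_nonneg x)).trans hpoly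
  have htanh : tanh h ≤ tanh (h * y) := tanh_monotone (le_mul_of_one_le_right hh hy)
  have htanh_nonneg : 0 ≤ tanh h := by simpa using tanh_monotone hh
  calc tanh h * ((x - y) * x ^ 2)
      ≤ (x * (g + x ^ 2) - y * (g + y ^ 2)) * tanh (h * y) := by
        rw [mul_comm]
        exact mul_le_mul hpoly htanh htanh_nonneg hpoly_nonneg
    _ ≤ dispersion g h x - dispersion g h y :=
        sub_mul_le_mul_sub_mul (by positivity) (sub_nonneg.1 hpoly_nonneg)
          (tanh_monotone (mul_le_mul_of_nonneg_left hyx hh))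

lemma sqrt_dispersion_le (hg : 0 ≤ g) (hx : 1 ≤ x) :
    √(dispersion g h x) ≤ √(g + 1) * (x * √x) := by
  have hbound : dispersion g h x ≤ (g + 1) * (x ^ 2 * x) :=
    calc dispersion g h x ≤ x * (g + x ^ 2) :=
          mul_le_of_le_one_right (by positivity) (tanh_lt_one _).le
      _ ≤ (g + 1) * (x ^ 2 * x) := by nlinarith [mul_nonneg hg (by nlinarith : 0 ≤ x ^ 2 - 1)]
  calc √(dispersion g h x) ≤ √((g + 1) * (x ^ 2 * x)) := sqrt_le_sqrt hbound
    _ = √(g + 1) * (x * √x) := by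
        rw [sqrt_mul (by linarith), sqrt_mul (by positivity), sqrt_sq (by linarith)]

lemma le_sqrt_dispersion_sub_sqrt_dispersion (hg : 0 ≤ g) (hh : 0 < h) (hy : 1 ≤ y)
    (hyx : y ≤ x) :
    tanh h / (2 * √(g + 1)) * (x - y) * √x ≤ √(dispersion g h x) - √(dispersion g h y) := by
  have hx : 0 < x := by linarith
  have hgap := tanh_mul_le_dispersion_sub_dispersion hg hh.le hy hyx
  have hnum : 0 ≤ tanh h * ((x - y) * x ^ 2) :=
    mul_nonneg (tanh_pos hh).le (mul_nonneg (by linarith) (by positivity))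
  calc tanh h / (2 * √(g + 1)) * (x - y) * √x
      = tanh h * ((x - y) * x ^ 2) / (2 * (√(g + 1) * (x * √x))) := by
        have hsqrt : √x ^ 2 = x := sq_sqrt hx.le
        field_simp
        linear_combination tanh h * (x - y) * hsqrt
    _ ≤ (dispersion g h x - dispersion g h y) / (2 * √(dispersion g h x)) :=
        div_le_div₀ (hnum.trans hgap) hgap (by positivity [dispersion_pos hg hh hx])
          (by linarith [sqrt_dispersion_le (h := h) hg (hy.trans hyx)])
    _ ≤ √(dispersion g h x) - √(dispersion g h y) :=
        sub_div_two_sqrt_le_sqrt_sub_sqrt (dispersion_pos hg hh (by linarith)).le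
          (by linarith)

end dispersion

/-- Eigenvalue gap bound: for m ≤ n, |λ_n − λ_m| ≥ c·(n − m)·n^{1/2}. -/
theorem stmt1 (g h : ℝ) (hg : 0 < g) (hh : 0 < h)
    (lam : ℕ → ℂ)
    (hlam : ∀ n : ℕ, lam n =
      -Complex.I * Real.sqrt ((n : ℝ) * (g + (n : ℝ) ^ 2) * Real.tanh (h * n))) :
    ∃ c : ℝ, 0 < c ∧ ∀ n m : ℕ, 0 < n → 0 < m → m ≤ n →
      c * ((n : ℝ) - (m : ℝ)) * Real.sqrt n ≤ ‖lam n - lam m‖ := by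
  refine ⟨tanh h / (2 * √(g + 1)), by positivity [tanh_pos hh], fun n m _ hm hmn => ?_⟩
  rw [hlam n, hlam m, Complex.norm_neg_I_mul_ofReal_sub]
  calc tanh h / (2 * √(g + 1)) * ((n : ℝ) - m) * √n
      ≤ √(dispersion g h n) - √(dispersion g h m) :=
        le_sqrt_dispersion_sub_sqrt_dispersion hg.le hh (by exact_mod_cast hm)
          (by exact_mod_cast hmn)
    _ ≤ _ := le_abs_self _
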